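/- arXiv:1611.02241 — 3 statements merged into one kernel-verified Lean document; each statement's English description precedes it below -/
import Mathlib

section
/- Let φ(b) = (a+b)³(1-α) + ((w-b)³ - (a-b)³)α for 0 < α < 1/2 and 0 < a < w. Then the unique critical point of φ on (0, ∞) satisfying φ'(b) = 0 with b minimizing φ is b_opt = (√(α(w-a)(w + (3-4α)a)) - (1-2α)a - αw) / (1-α). -/
/-- The optimal scanning window side length: `b_opt` is the unique critical
point of `φ(b) = (a+b)³(1-α) + ((w-b)³ - (a-b)³)α` on `(0, ∞)`, and it
minimizes `φ` there. -/
theorem optimal_scanning_window (a w α : ℝ) (ha : 0 < a) (haw : a < w)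
    (hα0 : 0 < α) (hα : α < 1 / 2)
    (φ : ℝ → ℝ)
    (hφ : φ = fun b => (a + b) ^ 3 * (1 - α) + ((w - b) ^ 3 - (a - b) ^ 3) * α)
    (bopt : ℝ)
    (hbopt : bopt = (Real.sqrt (α * (w - a) * (w + (3 - 4 * α) * a))
      - (1 - 2 * α) * a - α * w) / (1 - α)) :
    deriv φ bopt = 0 ∧
    (∀ b ∈ Set.Ioi (0 : ℝ), deriv φ b = 0 → b = bopt) ∧
    IsMinOn φ (Set.Ioi (0 : ℝ)) bopt := by
  subst hφ
  have h1α : (0:ℝ) < 1 - α := by linarith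
  set s : ℝ := Real.sqrt (α * (w - a) * (w + (3 - 4 * α) * a)) with hsdef
  have hDnn : 0 ≤ α * (w - a) * (w + (3 - 4 * α) * a) := by
    apply mul_nonneg (mul_nonneg hα0.le (by linarith))
    nlinarith
  have hs2 : s ^ 2 = α * (w - a) * (w + (3 - 4 * α) * a) := Real.sq_sqrt hDnn
  have hs0 : 0 ≤ s := Real.sqrt_nonneg _
  set c : ℝ := (1 - 2 * α) * a + α * w with hcdef
  have hc : 0 < c := by nlinarith
  have hbs : (1 - α) * bopt = s - c := by
    rw [hbopt]; field_simp; ring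
  have hder : ∀ b : ℝ, deriv (fun b => (a + b) ^ 3 * (1 - α) + ((w - b) ^ 3 - (a - b) ^ 3) * α) b
      = 3 * ((1 - α) * b ^ 2 + 2 * c * b + (a ^ 2 - α * w ^ 2)) := by
    intro b
    have h1 : HasDerivAt (fun x : ℝ => (a + x) ^ 3) (3 * (a + b) ^ 2 * 1) b :=
      ((hasDerivAt_id b).const_add a).pow 3
    have h2 : HasDerivAt (fun x : ℝ => (w - x) ^ 3) (3 * (w - b) ^ 2 * (-1)) b :=
      ((hasDerivAt_id b).const_sub w).pow 3
    have h3 : HasDerivAt (fun x : ℝ => (a - x) ^ 3) (3 * (a - b) ^ 2 * (-1)) b :=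
      ((hasDerivAt_id b).const_sub a).pow 3
    have h : HasDerivAt (fun x : ℝ => (a + x) ^ 3 * (1 - α) + ((w - x) ^ 3 - (a - x) ^ 3) * α)
        (3 * (a + b) ^ 2 * 1 * (1 - α) + (3 * (w - b) ^ 2 * (-1) - 3 * (a - b) ^ 2 * (-1)) * α) b :=
      ((h1.mul_const _).add ((h2.sub h3).mul_const _))
    rw [h.deriv]; rw [hcdef]; ring
  have hroot : (1 - α) * bopt ^ 2 + 2 * c * bopt + (a ^ 2 - α * w ^ 2) = 0 := by
    have h : (1 - α) * ((1 - α) * bopt ^ 2 + 2 * c * bopt + (a ^ 2 - α * w ^ 2)) = 0 := by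
      linear_combination ((1 - α) * bopt + s + c) * hbs + hs2
    have := mul_eq_zero.mp h
    rcases this with h' | h'
    · exact absurd h' (by linarith)
    · exact h'
  refine ⟨?_, ?_, ?_⟩
  · rw [hder]; linarith [hroot]
  · intro b hb hde
    rw [hder] at hde
    have hq : (1 - α) * b ^ 2 + 2 * c * b + (a ^ 2 - α * w ^ 2) = 0 := by linarith
    have hfac : (b - bopt) * ((1 - α) * (b + bopt) + 2 * c) = 0 := by
      linear_combination hq - hroot
    rcases mul_eq_zero.mp hfac with h' | h'
    · linarith
    · exfalso
      have hbpos : (0:ℝ) < b := hb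
      nlinarith [hbs]
  · rw [isMinOn_iff]
    intro b hb
    have hbpos : (0:ℝ) < b := hb
    have key : ((a + b) ^ 3 * (1 - α) + ((w - b) ^ 3 - (a - b) ^ 3) * α)
        - ((a + bopt) ^ 3 * (1 - α) + ((w - bopt) ^ 3 - (a - bopt) ^ 3) * α)
        = (b - bopt) ^ 2 * ((1 - α) * b + 2 * ((1 - α) * bopt) + 3 * c) := by
      linear_combination 3 * (b - bopt) * hroot
    show (a + bopt) ^ 3 * (1 - α) + ((w - bopt) ^ 3 - (a - bopt) ^ 3) * α ≤ (a + b) ^ 3 * (1 - α) + ((w - b) ^ 3 - (a - b) ^ 3) * α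
    nlinarith [sq_nonneg (b - bopt), hbs, mul_pos h1α hbpos]
end

section
/- Under the assumptions 0 < a < w and 0 < α < 1/2, the quantity under the square root in b_opt is positive: α(w-a)(w + (3-4α)a) > 0, and b_opt as defined satisfies φ''(b_opt) > 0 (so b_opt is a local minimum of φ). -/
/-- Under `0 < a < w` and `0 < α < 1/2`, the discriminant in `b_opt` is
positive: `α(w-a)(w+(3-4α)a) > 0`, and `φ''(b_opt) > 0`, so `b_opt` is a
local minimum of `φ(b) = (a+b)³(1-α) + ((w-b)³-(a-b)³)α`. -/
theorem bopt_discriminant_pos_and_second_deriv_pos (a w α : ℝ)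
    (ha : 0 < a) (haw : a < w) (hα0 : 0 < α) (hα : α < 1 / 2)
    (φ : ℝ → ℝ)
    (hφ : φ = fun b => (a + b) ^ 3 * (1 - α) + ((w - b) ^ 3 - (a - b) ^ 3) * α)
    (bopt : ℝ)
    (hbopt : bopt = (Real.sqrt (α * (w - a) * (w + (3 - 4 * α) * a))
      - (1 - 2 * α) * a - α * w) / (1 - α)) :
    0 < α * (w - a) * (w + (3 - 4 * α) * a) ∧
    0 < deriv (deriv φ) bopt := by
  have hD : 0 < α * (w - a) * (w + (3 - 4 * α) * a) := by
    have h3 : 0 < w + (3 - 4 * α) * a := by nlinarith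
    have h4 : 0 < w - a := by linarith
    positivity
  refine ⟨hD, ?_⟩
  have hd1 : ∀ b : ℝ, HasDerivAt φ
      (3 * (a + b) ^ 2 * (1 - α) + (3 * (a - b) ^ 2 - 3 * (w - b) ^ 2) * α) b := by
    intro b
    rw [hφ]
    have h1 : HasDerivAt (fun b : ℝ => (a + b) ^ 3 * (1 - α))
        ((3 * (a + b) ^ 2 * 1) * (1 - α)) b :=
      (((hasDerivAt_id b).const_add a).pow 3).mul_const _
    have h2 : HasDerivAt (fun b : ℝ => ((w - b) ^ 3 - (a - b) ^ 3) * α)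
        ((3 * (w - b) ^ 2 * (-1) - 3 * (a - b) ^ 2 * (-1)) * α) b :=
      ((((hasDerivAt_id b).const_sub w).pow 3).sub
        (((hasDerivAt_id b).const_sub a).pow 3)).mul_const _
    exact (h1.add h2).congr_deriv (by ring)
  have hderiv : deriv φ = fun b =>
      3 * (a + b) ^ 2 * (1 - α) + (3 * (a - b) ^ 2 - 3 * (w - b) ^ 2) * α := by
    funext b; exact (hd1 b).deriv
  have hd2 : HasDerivAt (deriv φ)
      (6 * (a + bopt) * (1 - α) + 6 * (w - a) * α) bopt := by
    rw [hderiv]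
    have h1 : HasDerivAt (fun b : ℝ => 3 * (a + b) ^ 2 * (1 - α))
        ((3 * (2 * (a + bopt) ^ 1 * 1)) * (1 - α)) bopt :=
      (((hasDerivAt_id bopt).const_add a).pow 2).const_mul 3 |>.mul_const _
    have h2 : HasDerivAt (fun b : ℝ => (3 * (a - b) ^ 2 - 3 * (w - b) ^ 2) * α)
        ((3 * (2 * (a - bopt) ^ 1 * (-1)) - 3 * (2 * (w - bopt) ^ 1 * (-1))) * α) bopt :=
      (((((hasDerivAt_id bopt).const_sub a).pow 2).const_mul 3).sub
        ((((hasDerivAt_id bopt).const_sub w).pow 2).const_mul 3)).mul_const _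
    exact (h1.add h2).congr_deriv (by ring)
  rw [hd2.deriv]
  set s := Real.sqrt (α * (w - a) * (w + (3 - 4 * α) * a)) with hs
  have hspos : 0 < s := Real.sqrt_pos.mpr hD
  have h1α : (0:ℝ) < 1 - α := by linarith
  have hb : bopt * (1 - α) = s - (1 - 2 * α) * a - α * w := by
    rw [hbopt]; field_simp
  nlinarith [hb, hspos]
end

section
/- For any unimodal probability distribution on ℝ with mode m and finite variance σ², P(|X − m| > 3σ) ≤ 4/(9·9) = 4/81 < 0.05 (Gauss inequality / Vysochanskij–Petunin-type bound). -/
open MeasureTheory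

section GaussAux

open Set

private lemma gauss_ioo_sq_lint (c : ℝ) (hc : 0 < c) :
    ∫⁻ x in Ioo (0:ℝ) c, ENNReal.ofReal (x^2) = ENNReal.ofReal (c^3/3) := by
  rw [← ofReal_integral_eq_lintegral_ofReal]
  · rw [← integral_Ioc_eq_integral_Ioo, ← intervalIntegral.integral_of_le hc.le, integral_pow]
    norm_num
  · exact (continuous_pow 2).continuousOn.integrableOn_compact isCompact_Icc
      |>.mono_set Ioo_subset_Icc_self
  · exact ae_of_all _ fun x => sq_nonneg x

private lemma gauss_fiber_bound {T : Set ℝ} (hT0 : T ⊆ Set.Ioi 0)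
    (hdc : ∀ ⦃x⦄, x ∈ T → ∀ ⦃y⦄, 0 < y → y ≤ x → y ∈ T) {t : ℝ} (ht : 0 < t) :
    ENNReal.ofReal (9/4 * t^2) * volume (T ∩ Set.Ioi t) ≤
      ∫⁻ x in T, ENNReal.ofReal (x^2) := by
  set p := volume (T ∩ Set.Ioi t) with hp
  have claim : ∀ r : ℝ, ENNReal.ofReal (r - t) < p → Ioo 0 r ⊆ T := by
    intro r hr y hy
    by_cases hex : ∃ x ∈ T, r < x
    · obtain ⟨x, hxT, hrx⟩ := hex
      exact hdc hxT hy.1 (le_of_lt (lt_trans hy.2 hrx))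
    · push_neg at hex
      have hsub : T ∩ Set.Ioi t ⊆ Set.Ioc t r := fun x hx => ⟨hx.2, hex x hx.1⟩
      have hle : p ≤ volume (Set.Ioc t r) := measure_mono hsub
      rw [Real.volume_Ioc] at hle
      exact absurd hle (not_le.mpr hr)
  by_cases htop : p = ⊤
  · have hinf : ∫⁻ x in T, ENNReal.ofReal (x^2) = ⊤ := by
      apply ENNReal.eq_top_of_forall_nnreal_le
      intro r
      set c : ℝ := max 1 (3 * r) with hc
      have hc1 : (1:ℝ) ≤ c := le_max_left _ _
      have hc0 : 0 < c := lt_of_lt_of_le one_pos hc1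
      have hsub : Ioo 0 c ⊆ T := claim c (by rw [htop]; exact ENNReal.ofReal_lt_top)
      calc (r : ENNReal) ≤ ENNReal.ofReal (c^3/3) := by
            rw [← ENNReal.ofReal_coe_nnreal]
            apply ENNReal.ofReal_le_ofReal
            have h3 : (3:ℝ) * r ≤ c := le_max_right _ _
            nlinarith [r.2, sq_nonneg (c - 1), sq_nonneg c]
        _ = ∫⁻ x in Ioo (0:ℝ) c, ENNReal.ofReal (x^2) := (gauss_ioo_sq_lint c hc0).symm
        _ ≤ ∫⁻ x in T, ENNReal.ofReal (x^2) := lintegral_mono_set hsub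
    rw [hinf]; exact le_top
  · set q := p.toReal with hq
    have hq0 : 0 ≤ q := ENNReal.toReal_nonneg
    have hpq : p = ENNReal.ofReal q := (ENNReal.ofReal_toReal htop).symm
    by_cases hq0' : q = 0
    · have : p = 0 := by rw [hpq, hq0', ENNReal.ofReal_zero]
      rw [this, mul_zero]; exact zero_le
    have hqpos : 0 < q := lt_of_le_of_ne hq0 (Ne.symm hq0')
    have hsub : Ioo 0 (t + q) ⊆ T := by
      intro y hy
      have hr : ENNReal.ofReal ((y + (t + q))/2 - t) < p := by
        rw [hpq]
        apply ENNReal.ofReal_lt_ofReal_iff hqpos |>.mpr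
        linarith [hy.2]
      exact claim _ hr ⟨hy.1, by linarith [hy.2]⟩
    calc ENNReal.ofReal (9/4 * t^2) * p = ENNReal.ofReal (9/4 * t^2 * q) := by
          rw [hpq, ← ENNReal.ofReal_mul (by positivity)]
      _ ≤ ENNReal.ofReal ((t + q)^3/3) := by
          apply ENNReal.ofReal_le_ofReal
          nlinarith [mul_nonneg (sq_nonneg (q - t/2)) (by linarith : (0:ℝ) ≤ q + 4*t)]
      _ = ∫⁻ x in Ioo (0:ℝ) (t + q), ENNReal.ofReal (x^2) :=
          (gauss_ioo_sq_lint _ (by linarith)).symm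
      _ ≤ ∫⁻ x in T, ENNReal.ofReal (x^2) := lintegral_mono_set hsub

private lemma gauss_key_onesided {f : ℝ → ℝ} (hf : Measurable f) (hf0 : ∀ x, 0 ≤ f x)
    (hanti : AntitoneOn f (Set.Ici 0)) {t : ℝ} (ht : 0 < t) :
    ENNReal.ofReal (9/4 * t^2) * ∫⁻ x in Set.Ioi t, ENNReal.ofReal (f x) ≤
      ∫⁻ x in Set.Ioi 0, ENNReal.ofReal (x^2 * f x) := by
  have hmeas : ∀ u : ℝ, MeasurableSet {x : ℝ | u < f x} :=
    fun u => measurableSet_lt measurable_const hf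
  have hL : ∫⁻ x in Set.Ioi t, ENNReal.ofReal (f x)
      = ∫⁻ u in Set.Ioi (0:ℝ), volume ({x | u < f x} ∩ Set.Ioi t) := by
    rw [lintegral_eq_lintegral_meas_lt (volume.restrict (Set.Ioi t))
      (ae_of_all _ hf0) hf.aemeasurable]
    exact lintegral_congr fun u => Measure.restrict_apply (hmeas u)
  set ν : Measure ℝ := (volume.restrict (Set.Ioi 0)).withDensity
      (fun x => ENNReal.ofReal (x^2)) with hν
  have hR : ∫⁻ x in Set.Ioi (0:ℝ), ENNReal.ofReal (x^2 * f x)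
      = ∫⁻ u in Set.Ioi (0:ℝ), ∫⁻ x in {x | u < f x} ∩ Set.Ioi 0, ENNReal.ofReal (x^2) := by
    have h1 : ∫⁻ x in Set.Ioi (0:ℝ), ENNReal.ofReal (x^2 * f x)
        = ∫⁻ x, ENNReal.ofReal (f x) ∂ν := by
      rw [hν, lintegral_withDensity_eq_lintegral_mul _ (by fun_prop) (by fun_prop)]
      exact lintegral_congr fun x => by simp [ENNReal.ofReal_mul (sq_nonneg x)]
    rw [h1, lintegral_eq_lintegral_meas_lt ν (ae_of_all _ hf0) hf.aemeasurable]
    apply lintegral_congr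
    intro u
    rw [hν, withDensity_apply _ (hmeas u), Measure.restrict_restrict (hmeas u)]
  rw [hL, hR, ← lintegral_const_mul' _ _ ENNReal.ofReal_ne_top]
  apply lintegral_mono
  intro u
  have hsub : ({x | u < f x} ∩ Set.Ioi 0) ∩ Set.Ioi t = {x | u < f x} ∩ Set.Ioi t := by
    ext x
    simp only [Set.mem_inter_iff, Set.mem_Ioi, Set.mem_setOf_eq]
    exact ⟨fun ⟨⟨h1, _⟩, h3⟩ => ⟨h1, h3⟩, fun ⟨h1, h3⟩ => ⟨⟨h1, lt_trans ht h3⟩, h3⟩⟩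
  have := gauss_fiber_bound (T := {x | u < f x} ∩ Set.Ioi 0)
    Set.inter_subset_right
    (fun x hx y hy0 hyx => ⟨lt_of_lt_of_le hx.1 (hanti hy0.le (Set.mem_Ici.mpr (le_of_lt (Set.mem_Ioi.mp hx.2))) hyx), hy0⟩) ht
  rwa [hsub] at this

private lemma gauss_lint_shift (h : ℝ → ENNReal) (m a : ℝ) :
    ∫⁻ x in Set.Ioi a, h x = ∫⁻ y in Set.Ioi (a - m), h (y + m) := by
  rw [← lintegral_indicator measurableSet_Ioi _, ← lintegral_indicator measurableSet_Ioi _,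
    ← lintegral_add_right_eq_self ((Ioi a).indicator h) m]
  apply lintegral_congr
  intro x
  by_cases hx : a - m < x
  · rw [Set.indicator_of_mem (by simpa using hx : x ∈ Set.Ioi (a - m)),
      Set.indicator_of_mem (by simp only [Set.mem_Ioi]; linarith : x + m ∈ Set.Ioi a)]
  · have hx' : x ≤ a - m := not_lt.mp hx
    rw [Set.indicator_of_notMem
        (by simp only [Set.mem_Ioi, not_lt]; linarith : x ∉ Set.Ioi (a - m)),
      Set.indicator_of_notMem
        (by simp only [Set.mem_Ioi, not_lt]; linarith : x + m ∉ Set.Ioi a)]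

private lemma gauss_lint_reflect (h : ℝ → ENNReal) (m a : ℝ) :
    ∫⁻ x in Set.Iio a, h x = ∫⁻ y in Set.Ioi (m - a), h (m - y) := by
  have hneg : ∀ k : ℝ → ENNReal, ∫⁻ x, k (-x) = ∫⁻ x, k x := by
    intro k
    have := lintegral_map_equiv (μ := (volume : Measure ℝ)) k (MeasurableEquiv.neg ℝ)
    have h2 : Measure.map (⇑(MeasurableEquiv.neg ℝ)) volume = volume := by
      have h3 : ⇑(MeasurableEquiv.neg ℝ) = fun x : ℝ => -x := rfl
      rw [h3]
      exact Measure.map_neg_eq_self (volume : Measure ℝ)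
    rw [h2] at this
    exact this.symm
  rw [← lintegral_indicator measurableSet_Iio _, ← lintegral_indicator measurableSet_Ioi _,
    ← lintegral_add_right_eq_self ((Set.Iio a).indicator h) m,
    ← hneg (fun x => (Set.Iio a).indicator h (x + m))]
  apply lintegral_congr
  intro x
  by_cases hx : m - a < x
  · rw [Set.indicator_of_mem (by simpa using hx : x ∈ Set.Ioi (m - a)),
      Set.indicator_of_mem (by simp only [Set.mem_Iio]; linarith : -x + m ∈ Set.Iio a)]
    norm_num [sub_eq_neg_add]
  · have hx' : x ≤ m - a := not_lt.mp hx
    rw [Set.indicator_of_notMem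
        (by simp only [Set.mem_Ioi, not_lt]; linarith : x ∉ Set.Ioi (m - a)),
      Set.indicator_of_notMem
        (by simp only [Set.mem_Iio, not_lt]; linarith : -x + m ∉ Set.Iio a)]

end GaussAux

/-- Gauss inequality / extended `3σ`-rule for unimodal distributions: if `μ` is a
probability measure on `ℝ` with a density that is nondecreasing before the mode `m`
and nonincreasing after it, and `∫ (x−m)² dμ = σ²`, then
`μ(|X − m| > 3σ) ≤ 4/81 < 0.05`. -/
theorem gauss_inequality_three_sigma
    (μ : Measure ℝ) [IsProbabilityMeasure μ]
    (f : ℝ → ℝ) (hf : Measurable f) (hf0 : ∀ x, 0 ≤ f x)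
    (hdens : μ = volume.withDensity (fun x => ENNReal.ofReal (f x)))
    (m : ℝ) (hmono : MonotoneOn f (Set.Iic m)) (hanti : AntitoneOn f (Set.Ici m))
    (σ : ℝ) (hσ : 0 ≤ σ)
    (hvar : Integrable (fun x => (x - m) ^ 2) μ)
    (hσ2 : ∫ x, (x - m) ^ 2 ∂μ = σ ^ 2) :
    μ {x | 3 * σ < |x - m|} ≤ ENNReal.ofReal (4 / 81) ∧ (4 / 81 : ℝ) < 0.05 := by
  refine ⟨?_, by norm_num⟩
  rcases eq_or_lt_of_le hσ with hσ0 | hσpos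
  · -- degenerate case σ = 0
    have h0 : ∫ x, (x - m)^2 ∂μ = 0 := by rw [hσ2, ← hσ0]; norm_num
    have hae : (fun x => (x - m)^2) =ᵐ[μ] 0 :=
      (integral_eq_zero_iff_of_nonneg_ae (ae_of_all _ fun x => sq_nonneg _) hvar).mp h0
    have hnull : μ {x : ℝ | (x - m)^2 ≠ 0} = 0 := by
      simpa [Filter.EventuallyEq, ae_iff] using hae
    have hsub : {x : ℝ | 3 * σ < |x - m|} ⊆ {x : ℝ | (x - m)^2 ≠ 0} := by
      intro x hx
      simp only [Set.mem_setOf_eq] at hx ⊢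
      rw [← hσ0] at hx
      simp only [mul_zero] at hx
      have : x - m ≠ 0 := fun hc => by rw [hc] at hx; simp at hx
      exact pow_ne_zero _ this
    rw [measure_mono_null hsub hnull]
    exact zero_le
  · -- main case σ > 0
    set t : ℝ := 3 * σ with htdef
    have ht : 0 < t := by positivity
    set g₁ : ℝ → ℝ := fun y => f (y + m) with hg₁
    set g₂ : ℝ → ℝ := fun y => f (m - y) with hg₂
    have hg₁m : Measurable g₁ := hf.comp (by fun_prop)
    have hg₂m : Measurable g₂ := hf.comp (by fun_prop)
    have hg₁anti : AntitoneOn g₁ (Set.Ici 0) := by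
      intro a ha b hb hab
      have ha' : (0:ℝ) ≤ a := ha
      have hb' : (0:ℝ) ≤ b := hb
      exact hanti (by simp [Set.mem_Ici]; linarith) (by simp [Set.mem_Ici]; linarith)
        (by linarith)
    have hg₂anti : AntitoneOn g₂ (Set.Ici 0) := by
      intro a ha b hb hab
      have ha' : (0:ℝ) ≤ a := ha
      have hb' : (0:ℝ) ≤ b := hb
      exact hmono (by simp [Set.mem_Iic]; linarith) (by simp [Set.mem_Iic]; linarith)
        (by linarith)
    -- tail measure splits
    have hSdecomp : {x : ℝ | 3 * σ < |x - m|} = Set.Ioi (m + t) ∪ Set.Iio (m - t) := by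
      ext x
      simp only [Set.mem_setOf_eq, Set.mem_union, Set.mem_Ioi, Set.mem_Iio, lt_abs]
      constructor
      · rintro (h | h)
        · left; linarith
        · right; linarith
      · rintro (h | h)
        · left; linarith
        · right; linarith
    have hμeval : ∀ s : Set ℝ, MeasurableSet s → μ s = ∫⁻ x in s, ENNReal.ofReal (f x) := by
      intro s hs
      rw [hdens, withDensity_apply _ hs]
    have hμS : μ {x : ℝ | 3 * σ < |x - m|}
        = (∫⁻ y in Set.Ioi t, ENNReal.ofReal (g₁ y))
          + ∫⁻ y in Set.Ioi t, ENNReal.ofReal (g₂ y) := by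
      rw [hSdecomp, hμeval _ (measurableSet_Ioi.union measurableSet_Iio),
        lintegral_union measurableSet_Iio
          (by rw [Set.disjoint_left]; intro x hx hx'; simp at hx hx'; linarith)]
      congr 1
      · rw [gauss_lint_shift (fun x => ENNReal.ofReal (f x)) m (m + t)]
        norm_num
        rfl
      · rw [gauss_lint_reflect (fun x => ENNReal.ofReal (f x)) m (m - t)]
        norm_num
        rfl
    -- variance bound
    have hvar0 : (0:ℝ → ℝ) ≤ᵐ[μ] fun x => (x - m)^2 := ae_of_all _ fun x => sq_nonneg _
    have hvarlint : ∫⁻ x, ENNReal.ofReal ((x - m)^2) ∂μ = ENNReal.ofReal (σ^2) := by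
      rw [← hσ2, ← ofReal_integral_eq_lintegral_ofReal hvar hvar0]
    have hvarvol : ∫⁻ x, ENNReal.ofReal (f x) * ENNReal.ofReal ((x - m)^2) ∂volume
        = ENNReal.ofReal (σ^2) := by
      rw [← hvarlint, hdens, lintegral_withDensity_eq_lintegral_mul _ (by fun_prop) (by fun_prop)]
      rfl
    -- split variance integral
    have hsplit : (∫⁻ y in Set.Ioi (0:ℝ), ENNReal.ofReal (y^2 * g₁ y))
          + (∫⁻ y in Set.Ioi (0:ℝ), ENNReal.ofReal (y^2 * g₂ y))
        ≤ ENNReal.ofReal (σ^2) := by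
      rw [← hvarvol]
      have e₁ : ∫⁻ y in Set.Ioi (0:ℝ), ENNReal.ofReal (y^2 * g₁ y)
          = ∫⁻ x in Set.Ioi m, ENNReal.ofReal (f x) * ENNReal.ofReal ((x - m)^2) := by
        rw [gauss_lint_shift (fun x => ENNReal.ofReal (f x) * ENNReal.ofReal ((x - m)^2)) m m]
        norm_num
        apply lintegral_congr
        intro y
        rw [ENNReal.ofReal_mul (sq_nonneg y), mul_comm]
      have e₂ : ∫⁻ y in Set.Ioi (0:ℝ), ENNReal.ofReal (y^2 * g₂ y)
          = ∫⁻ x in Set.Iio m, ENNReal.ofReal (f x) * ENNReal.ofReal ((x - m)^2) := by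
        rw [gauss_lint_reflect (fun x => ENNReal.ofReal (f x) * ENNReal.ofReal ((x - m)^2)) m m]
        norm_num
        apply lintegral_congr
        intro y
        rw [ENNReal.ofReal_mul (sq_nonneg y), mul_comm]
      rw [e₁, e₂, ← lintegral_union measurableSet_Iio
        (by rw [Set.disjoint_left]; intro x hx hx'; simp at hx hx'; linarith)]
      exact lintegral_mono' Measure.restrict_le_self le_rfl
    -- apply one-sided key lemma twice
    have hkey : ENNReal.ofReal (9/4 * t^2) * μ {x : ℝ | 3 * σ < |x - m|}
        ≤ ENNReal.ofReal (σ^2) := by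
      rw [hμS, mul_add]
      calc ENNReal.ofReal (9/4 * t^2) * (∫⁻ y in Set.Ioi t, ENNReal.ofReal (g₁ y))
            + ENNReal.ofReal (9/4 * t^2) * (∫⁻ y in Set.Ioi t, ENNReal.ofReal (g₂ y))
          ≤ (∫⁻ y in Set.Ioi (0:ℝ), ENNReal.ofReal (y^2 * g₁ y))
            + (∫⁻ y in Set.Ioi (0:ℝ), ENNReal.ofReal (y^2 * g₂ y)) :=
            add_le_add
              (gauss_key_onesided hg₁m (fun y => hf0 _) hg₁anti ht)
              (gauss_key_onesided hg₂m (fun y => hf0 _) hg₂anti ht)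
        _ ≤ ENNReal.ofReal (σ^2) := hsplit
    -- conclude
    have hid : ENNReal.ofReal (σ^2) = ENNReal.ofReal (9/4 * t^2) * ENNReal.ofReal (4/81) := by
      rw [← ENNReal.ofReal_mul (by positivity)]
      congr 1
      rw [htdef]
      ring
    rw [hid] at hkey
    exact (ENNReal.mul_le_mul_iff_right (by positivity) ENNReal.ofReal_ne_top).mp hkey
end
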